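/- Let $\beta_1, \ldots, \beta_k < 0$, $\alpha_n \to \infty$ with $n e^{\alpha_n \beta_1} \to \lambda \in (0, \infty)$. Then $\sum_{j=0}^{n} (j^2 - j) \binom{n}{j} e^{\alpha_n\beta_1 j + \sum_{p=2}^k \alpha_n \beta_p j^p / n^{p-1}} \to \lambda^2 e^{\lambda}$ as $n \to \infty$. -/

import Mathlib

open Real Filter Finset

open Topology

/-!
Write `x n = exp (α n * β 1)`, so that the `j`-th summand is
`(j² - j) * C(n, j) * x n ^ j * exp (c n j)` with a correction `c n j ≤ 0`. From
`n * x n → λ` one gets `α n = O(log n)`, hence `c n j → 0` for each fixed `j`, and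
`C(n, j) * x n ^ j → λ ^ j / j!`. The bound `C(n, j) ≤ n ^ j / j!` dominates the summands by
`j² (λ + 1) ^ j / j!`, so Tannery's theorem gives the limit `∑ (j² - j) λ ^ j / j! = λ² e^λ`.
-/

theorem hasSum_sq_sub_mul_pow_div_factorial (x : ℝ) :
    HasSum (fun j : ℕ => ((j : ℝ) ^ 2 - j) * x ^ j / j.factorial) (x ^ 2 * exp x) := by
  have hexp := (NormedSpace.expSeries_div_hasSum_exp x).mul_left (x ^ 2)
  rw [← exp_eq_exp_ℝ] at hexp
  refine (hasSum_nat_add_iff' 2).mp ?_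
  have hshift : ∀ m : ℕ, (((m + 2 : ℕ) : ℝ) ^ 2 - ((m + 2 : ℕ) : ℝ)) * x ^ (m + 2) /
      (m + 2).factorial = x ^ 2 * (x ^ m / m.factorial) := fun m => by
    push_cast [Nat.factorial_succ]
    field_simp
    ring
  simp only [hshift]
  simpa [sum_range_succ] using hexp

theorem tendsto_div_natCast_of_tendsto_natCast_mul_exp {a : ℕ → ℝ} {lam : ℝ} (hlam : 0 < lam)
    (h : Tendsto (fun n : ℕ => n * exp (a n)) atTop (𝓝 lam)) :
    Tendsto (fun n : ℕ => a n / n) atTop (𝓝 0) := by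
  have hlog : Tendsto (fun n : ℕ => log (n * exp (a n)) / n) atTop (𝓝 0) := by
    simpa using ((continuousAt_log hlam.ne').tendsto.comp h).div_atTop
      tendsto_natCast_atTop_atTop
  have hlogn : Tendsto (fun n : ℕ => log n / n) atTop (𝓝 0) :=
    isLittleO_log_id_atTop.tendsto_div_nhds_zero.comp tendsto_natCast_atTop_atTop
  have hdiff := hlog.sub hlogn
  rw [sub_zero] at hdiff
  refine hdiff.congr' ?_
  filter_upwards [eventually_ne_atTop 0] with n hn
  rw [log_mul (by exact_mod_cast hn) (exp_pos _).ne', log_exp]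
  ring

theorem tendsto_div_natCast_pow_of_tendsto_div_natCast {a : ℕ → ℝ}
    (ha : Tendsto (fun n : ℕ => a n / n) atTop (𝓝 0)) (m : ℕ) :
    Tendsto (fun n : ℕ => a n / (n : ℝ) ^ (m + 1)) atTop (𝓝 0) := by
  have := ha.mul ((tendsto_inv_atTop_zero.comp tendsto_natCast_atTop_atTop).pow m)
  rw [zero_mul] at this
  refine this.congr fun n => ?_
  simp only [Function.comp_apply, pow_succ', mul_inv, div_eq_mul_inv, inv_pow]
  ring

theorem tendsto_sum_mul_pow_div_natCast_pow {a : ℕ → ℝ}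
    (ha : Tendsto (fun n : ℕ => a n / n) atTop (𝓝 0)) (β : ℕ → ℝ) {s : Finset ℕ}
    (hs : ∀ p ∈ s, 2 ≤ p) (j : ℕ) :
    Tendsto (fun n : ℕ => ∑ p ∈ s, a n * β p * (j : ℝ) ^ p / (n : ℝ) ^ (p - 1))
      atTop (𝓝 0) := by
  rw [← sum_const_zero (s := s)]
  refine tendsto_finsetSum s fun p hp => ?_
  obtain ⟨m, rfl⟩ := Nat.exists_eq_add_of_le' (hs p hp)
  have := (tendsto_div_natCast_pow_of_tendsto_div_natCast ha m).mul_const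
    (β (m + 2) * (j : ℝ) ^ (m + 2))
  rw [zero_mul] at this
  refine this.congr fun n => ?_
  rw [show m + 2 - 1 = m + 1 by omega]
  ring

theorem tendsto_sum_choose_mul_pow_mul {x : ℕ → ℝ} {e : ℕ → ℕ → ℝ} {w : ℕ → ℝ} {lam M : ℝ}
    (hx : Tendsto (fun n : ℕ => n * x n) atTop (𝓝 lam))
    (he : ∀ j, Tendsto (e · j) atTop (𝓝 1)) (he_le : ∀ᶠ n in atTop, ∀ j, ‖e n j‖ ≤ 1)
    (hM : |lam| < M) (hw : Summable fun j => ‖w j‖ * M ^ j / j.factorial) :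
    Tendsto (fun n => ∑ j ∈ range (n + 1), w j * n.choose j * x n ^ j * e n j)
      atTop (𝓝 (∑' j, w j * lam ^ j / j.factorial)) := by
  have hsum_eq_tsum : ∀ n, ∑ j ∈ range (n + 1), w j * n.choose j * x n ^ j * e n j
      = ∑' j, w j * n.choose j * x n ^ j * e n j := fun n =>
    (tsum_eq_sum fun j hj => by
      simp [Nat.choose_eq_zero_of_lt (by simpa [Nat.lt_succ_iff] using hj : n < j)]).symm
  simp_rw [hsum_eq_tsum]
  refine tendsto_tsum_of_dominated_convergence hw (fun j => ?_) ?_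
  · simpa [mul_assoc, mul_div_assoc] using
      (tendsto_const_nhds (x := w j)).mul
        ((ProbabilityTheory.tendsto_choose_mul_pow_atTop j hx).mul (he j))
  · filter_upwards [he_le, hx.norm.eventually (eventually_le_nhds hM)] with n hen hxn j
    calc ‖w j * n.choose j * x n ^ j * e n j‖
        ≤ ‖w j‖ * ((n : ℝ) ^ j / j.factorial) * ‖x n‖ ^ j * 1 := by
          simp only [norm_mul, norm_pow, Real.norm_natCast]
          gcongr
          exacts [Nat.choose_le_pow_div j n, hen j]
      _ = ‖w j‖ * ‖n * x n‖ ^ j / j.factorial := by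
          rw [norm_mul, Real.norm_natCast, mul_pow]
          ring
      _ ≤ ‖w j‖ * M ^ j / j.factorial := by gcongr

theorem stmt14 (k : ℕ) (hk : 1 ≤ k) (β : ℕ → ℝ)
    (hβ : ∀ p ∈ Finset.Icc 1 k, β p < 0)
    (α : ℕ → ℝ) (hα : Tendsto α atTop atTop)
    (lam : ℝ) (hlam : 0 < lam)
    (h : Tendsto (fun n : ℕ => (n : ℝ) * Real.exp (α n * β 1)) atTop (nhds lam)) :
    Tendsto (fun n : ℕ => ∑ j ∈ Finset.range (n + 1), ((j : ℝ) ^ 2 - j) * (n.choose j : ℝ) *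
        Real.exp (α n * β 1 * j +
          ∑ p ∈ Finset.Icc 2 k, α n * β p * (j : ℝ) ^ p / (n : ℝ) ^ (p - 1)))
      atTop (nhds (lam ^ 2 * Real.exp lam)) := by
  set c : ℕ → ℕ → ℝ := fun n j => ∑ p ∈ Icc 2 k, α n * β p * (j : ℝ) ^ p / (n : ℝ) ^ (p - 1)
  have hβ1 : β 1 < 0 := hβ 1 (mem_Icc.mpr ⟨le_rfl, hk⟩)
  have hαn : Tendsto (fun n : ℕ => α n / n) atTop (𝓝 0) := by
    simpa [mul_div_right_comm, hβ1.ne] using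
      (tendsto_div_natCast_of_tendsto_natCast_mul_exp hlam h).div_const (β 1)
  have hc : ∀ j, Tendsto (c · j) atTop (𝓝 0) := tendsto_sum_mul_pow_div_natCast_pow hαn β
    (fun p hp => (mem_Icc.mp hp).1)
  have hc_nonpos : ∀ᶠ n in atTop, ∀ j, c n j ≤ 0 := by
    filter_upwards [hα.eventually_ge_atTop 0] with n hα_nonneg j
    refine sum_nonpos fun p hp => div_nonpos_of_nonpos_of_nonneg ?_ (by positivity)
    obtain ⟨hp2, hpk⟩ := mem_Icc.mp hp
    have hβp : β p < 0 := hβ p (mem_Icc.mpr ⟨by omega, hpk⟩)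
    exact mul_nonpos_of_nonpos_of_nonneg (mul_nonpos_of_nonneg_of_nonpos hα_nonneg hβp.le)
      (by positivity)
  have hw : Summable fun j : ℕ => ‖(j : ℝ) ^ 2 - j‖ * (lam + 1) ^ j / j.factorial := by
    refine (hasSum_sq_sub_mul_pow_div_factorial (lam + 1)).summable.congr fun j => ?_
    have : (j : ℝ) ≤ (j : ℝ) ^ 2 := by exact_mod_cast Nat.le_self_pow two_ne_zero j
    rw [Real.norm_of_nonneg (by linarith)]
  have key := tendsto_sum_choose_mul_pow_mul (e := fun n j => exp (c n j)) h
    (fun j => (continuous_exp.tendsto' 0 1 exp_zero).comp (hc j))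
    (hc_nonpos.mono fun n hn j => by simpa using hn j) (by rw [abs_of_pos hlam]; linarith) hw
  rw [(hasSum_sq_sub_mul_pow_div_factorial lam).tsum_eq] at key
  refine key.congr fun n => sum_congr rfl fun j _ => ?_
  rw [exp_add, mul_comm _ (j : ℝ), exp_nat_mul]
  ring
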